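/- arXiv:2405.15950 — 2 statements merged into one kernel-verified Lean document; each statement's English description precedes it below -/
import Mathlib

section
/- If 0 < c < 1 and 0 ≤ R² ≤ 1 and c < (1 - R²)/(1 - R²/2), then (1 - R²) > c² + (1 - c)²·(1 - R²). -/
theorem stmt_0 (c r : ℝ) (hc0 : 0 < c) (hc1 : c < 1) (hr0 : 0 ≤ r) (hr1 : r ≤ 1)
    (hthr : c < (1 - r) / (1 - r / 2)) :
    1 - r > c ^ 2 + (1 - c) ^ 2 * (1 - r) := by
  have hden : 0 < 1 - r / 2 := by linarith
  have h2 : c * (1 - r / 2) < 1 - r := (lt_div_iff₀ hden).mp hthr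
  nlinarith [sq_nonneg c, sq_nonneg (1 - c), mul_pos hc0 hden]
end

section
/- Let V > 0 and E ≥ 0 be real numbers with E = V·(1 - r) for some r with 0 ≤ r ≤ 1, and let 0 < c < 1 with c < (1 - r)/(1 - r/2). If the cross term vanishes, then c²·V + (1 - c)²·E < E. -/
theorem stmt_3 (V E r c : ℝ) (hV : 0 < V) (hE : 0 ≤ E) (hr0 : 0 ≤ r) (hr1 : r ≤ 1)
    (hEV : E = V * (1 - r)) (hc0 : 0 < c) (hc1 : c < 1)
    (hthr : c < (1 - r) / (1 - r / 2)) :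
    c ^ 2 * V + (1 - c) ^ 2 * E < E := by
  have hd : (0:ℝ) < 1 - r / 2 := by linarith
  have h : c * (1 - r / 2) < 1 - r := by
    rw [lt_div_iff₀ hd] at hthr; linarith
  subst hEV
  nlinarith [mul_pos hc0 hV]
end
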